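/- Let k ≥ 2 be an integer and x a real number with 0 < x ≤ k/2. Then the Bessel function of the first kind satisfies |J_k(x)| ≤ e^{-k/5}. -/

import Mathlib

/-!
Since `(m + k)! ≥ k! (k + 1)^m`, the power series of `J_k(x)` is dominated termwise by
`(|x|/2)^k / k! · (x²/(4(k+1)))^m / m!`, whence `|J_k(x)| ≤ (|x|/2)^k / k! · exp (x²/(4(k+1)))`.
For `0 < x ≤ k/2` this is at most `(k/4)^k / k! · e^{k/16} ≤ e^k 4^{-k} e^{k/16}`, using
`k^k / k! ≤ e^k`, and `17/16 + 1/5 < log 4` gives the claim.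
-/

/-- The Bessel function of the first kind of integer order `k`, via its power series
`J_k(x) = ∑_{m≥0} (−1)^m (x/2)^{2m+k}/(m! (m+k)!)`. -/
noncomputable def besselJ (k : ℕ) (x : ℝ) : ℝ :=
  ∑' m : ℕ, (-1 : ℝ) ^ m * (x / 2) ^ (2 * m + k) / (m.factorial * (m + k).factorial)

open Real
open scoped Nat

lemma abs_besselJ_term_le (k m : ℕ) (x : ℝ) :
    |(-1 : ℝ) ^ m * (x / 2) ^ (2 * m + k) / (m ! * (m + k)!)| ≤
      (|x| / 2) ^ k / k ! * (((x / 2) ^ 2 / (k + 1)) ^ m / m !) := by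
  have hfac : (k ! * (k + 1) ^ m : ℝ) ≤ (m + k)! := by
    rw [Nat.add_comm]; exact_mod_cast Nat.factorial_mul_pow_le_factorial
  have habs : |(-1 : ℝ) ^ m * (x / 2) ^ (2 * m + k) / (m ! * (m + k)!)| =
      ((x / 2) ^ 2) ^ m * (|x| / 2) ^ k / (m ! * (m + k)!) := by
    rw [abs_div, abs_mul, abs_pow, abs_neg, abs_one, one_pow, one_mul, pow_add, pow_mul,
      abs_mul, abs_of_nonneg (by positivity : (0 : ℝ) ≤ ((x / 2) ^ 2) ^ m), abs_pow, abs_div,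
      abs_two, abs_of_pos (by positivity : (0 : ℝ) < m ! * (m + k)!)]
  calc _ = ((x / 2) ^ 2) ^ m * (|x| / 2) ^ k / (m ! * (m + k)!) := habs
    _ ≤ ((x / 2) ^ 2) ^ m * (|x| / 2) ^ k / (m ! * (k ! * (k + 1) ^ m)) := by gcongr
    _ = _ := by rw [div_pow ((x / 2) ^ 2)]; field_simp

theorem abs_besselJ_le (k : ℕ) (x : ℝ) :
    |besselJ k x| ≤ (|x| / 2) ^ k / k ! * exp ((x / 2) ^ 2 / (k + 1)) := by
  have hexp := (NormedSpace.expSeries_div_hasSum_exp ((x / 2) ^ 2 / (k + 1))).mul_left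
    ((|x| / 2) ^ k / k !)
  rw [← exp_eq_exp_ℝ] at hexp
  rw [← norm_eq_abs]
  exact tsum_of_norm_bounded hexp (abs_besselJ_term_le k · x)

lemma div_four_pow_div_factorial_mul_exp_le (k : ℕ) :
    (k / 4 : ℝ) ^ k / k ! * exp (k / 16) ≤ exp (-k / 5) := by
  have h4 : (4 : ℝ) ^ k = exp (k * log 4) := by
    rw [exp_nat_mul, exp_log (by norm_num)]
  have hlog4 : (101 / 80 : ℝ) ≤ log 4 := by
    rw [show (4 : ℝ) = 2 ^ 2 by norm_num, log_pow]
    linarith [log_two_gt_d9]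
  calc (k / 4 : ℝ) ^ k / k ! * exp (k / 16) = (k : ℝ) ^ k / k ! / 4 ^ k * exp (k / 16) := by
        rw [div_pow, div_right_comm]
    _ ≤ exp k / exp (k * log 4) * exp (k / 16) := by
        rw [← h4]; gcongr; exact pow_div_factorial_le_exp _ k.cast_nonneg k
    _ = exp (k * (17 / 16 - log 4)) := by rw [← exp_sub, ← exp_add]; ring_nf
    _ ≤ exp (-k / 5) := by gcongr; nlinarith [k.cast_nonneg (α := ℝ)]

theorem stmt9_general (k : ℕ) (x : ℝ) (hx : 0 < x) (hxk : x ≤ (k : ℝ) / 2) :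
    |besselJ k x| ≤ Real.exp (-(k : ℝ) / 5) := by
  have hk : (0 : ℝ) ≤ k := k.cast_nonneg
  have hy : |x| / 2 ≤ k / 4 := by rw [abs_of_pos hx]; linarith
  have hr : (x / 2) ^ 2 / (k + 1) ≤ k / 16 := by
    rw [div_le_div_iff₀ (by positivity) (by norm_num)]
    nlinarith
  calc |besselJ k x| ≤ (|x| / 2) ^ k / k ! * exp ((x / 2) ^ 2 / (k + 1)) := abs_besselJ_le k x
    _ ≤ (k / 4 : ℝ) ^ k / k ! * exp (k / 16) := by gcongr
    _ ≤ exp (-k / 5) := div_four_pow_div_factorial_mul_exp_le k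

/-- For `k ≥ 2` and `0 < x ≤ k/2`, `|J_k(x)| ≤ e^{-k/5}`. -/
theorem stmt9 (k : ℕ) (hk : 2 ≤ k) (x : ℝ) (hx : 0 < x) (hxk : x ≤ (k : ℝ) / 2) :
    |besselJ k x| ≤ Real.exp (-(k : ℝ) / 5) :=
  stmt9_general k x hx hxk
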